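/- arXiv:1608.05314 — 3 statements merged into one kernel-verified Lean document; each statement's English description precedes it below -/
import Mathlib

section
/- In any bicategory, a 2-cell ε : u ≫ f ⟶ 𝟙 a (where f : b ⟶ a and u : a ⟶ b) is the counit of an adjunction f ⊣ u (i.e. there exists a unit η : 𝟙 b ⟶ f ≫ u such that η and ε satisfy the triangle identities) if and only if the pair (u, ε) is an absolute right lifting of the identity 1-cell 𝟙 a through f. -/
/-!
If `η` and `ε` satisfy the triangle identities, then pasting with `ε` and the transpose
`χ ↦ p ◁ η ⊗≫ χ ▷ u` are mutually inverse, one triangle identity for each composite.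
Conversely, for an absolute right lifting the unit is the 2-cell corresponding to
`λ_ f ≫ (ρ_ f)⁻¹`; this is the left triangle identity, and the right one follows by
comparing the two 2-cells `u ⟶ 𝟙 a ≫ u` that correspond to `ε ≫ (λ_ (𝟙 a))⁻¹`.
-/

open CategoryTheory Bicategory

/-- Given 1-cells `f : b ⟶ a` and `g : c ⟶ a` in a bicategory, a 1-cell `ℓ : c ⟶ b`
together with a 2-cell `lam : ℓ ≫ f ⟶ g` is an *absolute right lifting* of `g`
through `f` if every 2-cell `χ : p ≫ f ⟶ q ≫ g` factors uniquely through `lam`. -/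
def IsAbsoluteRightLifting {B : Type*} [Bicategory B] {a b c : B}
    (f : b ⟶ a) (g : c ⟶ a) (ℓ : c ⟶ b) (lam : ℓ ≫ f ⟶ g) : Prop :=
  ∀ (x : B) (p : x ⟶ b) (q : x ⟶ c) (χ : p ≫ f ⟶ q ≫ g),
    ∃! ζ : p ⟶ q ≫ ℓ, χ = ζ ▷ f ≫ (α_ q ℓ f).hom ≫ q ◁ lam

namespace CategoryTheory.Bicategory

variable {B : Type*} [Bicategory B]

section Paste

variable {a b c x : B} {f : b ⟶ a} {g : c ⟶ a} {ℓ : c ⟶ b}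

def rightLiftPaste (lam : ℓ ≫ f ⟶ g) (p : x ⟶ b) (q : x ⟶ c) (ζ : p ⟶ q ≫ ℓ) :
    p ≫ f ⟶ q ≫ g :=
  ζ ▷ f ≫ (α_ q ℓ f).hom ≫ q ◁ lam

theorem isAbsoluteRightLifting_iff_bijective (lam : ℓ ≫ f ⟶ g) :
    IsAbsoluteRightLifting f g ℓ lam ↔
      ∀ (x : B) (p : x ⟶ b) (q : x ⟶ c), Function.Bijective (rightLiftPaste lam p q) := by
  simp only [Function.bijective_iff_existsUnique, rightLiftPaste, eq_comm]
  rfl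

end Paste

variable {a b x : B} {f : b ⟶ a} {u : a ⟶ b}

def unitTranspose (η : 𝟙 b ⟶ f ≫ u) (p : x ⟶ b) (q : x ⟶ a) (χ : p ≫ f ⟶ q ≫ 𝟙 a) :
    p ⟶ q ≫ u :=
  𝟙 p ⊗≫ p ◁ η ⊗≫ χ ▷ u ⊗≫ 𝟙 (q ≫ u)

theorem rightLiftPaste_unitTranspose {η : 𝟙 b ⟶ f ≫ u} {eps : u ≫ f ⟶ 𝟙 a}
    (hl : leftZigzag η eps = (λ_ f).hom ≫ (ρ_ f).inv) (p : x ⟶ b) (q : x ⟶ a)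
    (χ : p ≫ f ⟶ q ≫ 𝟙 a) :
    rightLiftPaste eps p q (unitTranspose η p q χ) = χ := by
  symm
  calc
    χ = 𝟙 _ ⊗≫ p ◁ leftZigzag η eps ⊗≫ χ ⊗≫ 𝟙 _ := by
      rw [hl]; bicategory
    _ = 𝟙 _ ⊗≫ p ◁ η ▷ f ⊗≫ ((p ≫ f) ◁ eps ≫ χ ▷ 𝟙 a) ⊗≫ 𝟙 _ := by
      rw [leftZigzag]; bicategory
    _ = 𝟙 _ ⊗≫ p ◁ η ▷ f ⊗≫ (χ ▷ (u ≫ f) ≫ (q ≫ 𝟙 a) ◁ eps) ⊗≫ 𝟙 _ := by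
      rw [whisker_exchange]
    _ = rightLiftPaste eps p q (unitTranspose η p q χ) := by
      rw [rightLiftPaste, unitTranspose]; bicategory

theorem unitTranspose_rightLiftPaste {η : 𝟙 b ⟶ f ≫ u} {eps : u ≫ f ⟶ 𝟙 a}
    (hr : rightZigzag η eps = (ρ_ u).hom ≫ (λ_ u).inv) (p : x ⟶ b) (q : x ⟶ a)
    (ζ : p ⟶ q ≫ u) :
    unitTranspose η p q (rightLiftPaste eps p q ζ) = ζ :=
  calc
    unitTranspose η p q (rightLiftPaste eps p q ζ)
        = 𝟙 _ ⊗≫ (p ◁ η ≫ ζ ▷ (f ≫ u)) ⊗≫ q ◁ eps ▷ u ⊗≫ 𝟙 _ := by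
      rw [unitTranspose, rightLiftPaste]; bicategory
    _ = 𝟙 _ ⊗≫ ζ ⊗≫ q ◁ rightZigzag η eps ⊗≫ 𝟙 _ := by
      rw [whisker_exchange, rightZigzag]; bicategory
    _ = ζ := by
      rw [hr]; bicategory

theorem leftZigzag_eq_rightLiftPaste (η : 𝟙 b ⟶ f ≫ u) (eps : u ≫ f ⟶ 𝟙 a) :
    leftZigzag η eps = rightLiftPaste eps (𝟙 b) f η := by
  rw [leftZigzag, rightLiftPaste]; bicategory

theorem rightZigzag_eq_unitTranspose (η : 𝟙 b ⟶ f ≫ u) (eps : u ≫ f ⟶ 𝟙 a) :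
    rightZigzag η eps = (ρ_ u).hom ≫ unitTranspose η u (𝟙 a) (eps ≫ (λ_ (𝟙 a)).inv) := by
  rw [rightZigzag, unitTranspose]; bicategory

theorem rightLiftPaste_leftUnitor_inv (eps : u ≫ f ⟶ 𝟙 a) :
    rightLiftPaste eps u (𝟙 a) (λ_ u).inv = eps ≫ (λ_ (𝟙 a)).inv := by
  rw [rightLiftPaste]; bicategory

end CategoryTheory.Bicategory

/-- A 2-cell `ε : u ≫ f ⟶ 𝟙 a` is the counit of an adjunction `f ⊣ u` (i.e. there
is a unit `η` such that `η` and `ε` satisfy the triangle identities) if and only if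
`(u, ε)` is an absolute right lifting of the identity `𝟙 a` through `f`. -/
theorem counit_iff_absolute_right_lifting {B : Type*} [Bicategory B] {a b : B}
    (f : b ⟶ a) (u : a ⟶ b) (eps : u ≫ f ⟶ 𝟙 a) :
    (∃ η : 𝟙 b ⟶ f ≫ u,
        leftZigzag η eps = (λ_ f).hom ≫ (ρ_ f).inv ∧
        rightZigzag η eps = (ρ_ u).hom ≫ (λ_ u).inv) ↔
    IsAbsoluteRightLifting f (𝟙 a) u eps := by
  rw [isAbsoluteRightLifting_iff_bijective]
  constructor
  · rintro ⟨η, hl, hr⟩ x p q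
    exact Function.bijective_iff_has_inverse.2
      ⟨unitTranspose η p q, unitTranspose_rightLiftPaste hr p q,
        rightLiftPaste_unitTranspose hl p q⟩
  · intro h
    obtain ⟨η, hη⟩ := (h b (𝟙 b) f).2 ((λ_ f).hom ≫ (ρ_ f).inv)
    have hl : leftZigzag η eps = (λ_ f).hom ≫ (ρ_ f).inv := by
      rw [leftZigzag_eq_rightLiftPaste, hη]
    have htranspose : unitTranspose η u (𝟙 a) (eps ≫ (λ_ (𝟙 a)).inv) = (λ_ u).inv :=
      (h a u (𝟙 a)).1 <| by
        rw [rightLiftPaste_unitTranspose hl, rightLiftPaste_leftUnitor_inv]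
    exact ⟨η, hl, by rw [rightZigzag_eq_unitTranspose, htranspose]⟩
end

section
/- In a strict 2-category with a 2-terminal object T, a 1-cell t : T ⟶ A is a terminal element of A (i.e. the unique 1-cell !_A : A ⟶ T is left adjoint to t) if and only if t is representably terminal: for every object X and every 1-cell f : X ⟶ A there exists a unique 2-cell from f to !_X ≫ t, where !_X : X ⟶ T is the unique 1-cell. -/
/-!
Under `bang A ⊣ t`, a 2-cell `f ⟶ bang X ≫ t` corresponds to a 2-cell `f ≫ bang A ⟶ bang X`,
and there is exactly one of those because `T` is 2-terminal. Conversely, representable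
terminality at `𝟙 A` provides the unit, 2-terminality the counit, and both triangle identities
hold automatically: they compare 2-cells between 1-cells isomorphic to `bang A` resp. `t`, whose
endo-2-cells are trivial (for `t` this is representable terminality at `t` itself).
-/

open CategoryTheory Bicategory

namespace CategoryTheory.Bicategory

variable {B : Type*} [Bicategory B]

def Adjunction.ofSubsingleton {a b : B} {l : a ⟶ b} {r : b ⟶ a}
    [Subsingleton (l ⟶ l)] [Subsingleton (r ⟶ r)]
    (unit : 𝟙 a ⟶ l ≫ r) (counit : r ≫ l ⟶ 𝟙 b) : l ⊣ r where
  unit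
  counit
  left_triangle := ((Iso.homCongr (λ_ l) (ρ_ l)).subsingleton).elim _ _
  right_triangle := ((Iso.homCongr (ρ_ r) (λ_ r)).subsingleton).elim _ _

theorem subsingleton_hom_of_two_terminal {T : B} {bang : ∀ X : B, X ⟶ T}
    (huniq : ∀ (X : B) (h : X ⟶ T), h = bang X)
    (h2 : ∀ (X : B) (φ : bang X ⟶ bang X), φ = 𝟙 (bang X))
    {X : B} (g h : X ⟶ T) : Subsingleton (g ⟶ h) := by
  obtain rfl := huniq X g
  obtain rfl := huniq X h
  exact ⟨fun φ ψ => (h2 X φ).trans (h2 X ψ).symm⟩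

end CategoryTheory.Bicategory

theorem terminal_element_iff_representably_terminal_general
    {B : Type*} [Bicategory B]
    (T : B) (bang : ∀ X : B, X ⟶ T)
    (huniq : ∀ (X : B) (h : X ⟶ T), h = bang X)
    (h2 : ∀ (X : B) (φ : bang X ⟶ bang X), φ = 𝟙 (bang X))
    {A : B} (t : T ⟶ A) :
    Nonempty (Bicategory.Adjunction (bang A) t) ↔
      ∀ (X : B) (f : X ⟶ A), Nonempty (Unique (f ⟶ bang X ≫ t)) := by
  have hom_eq (X : B) (g h : X ⟶ T) : g = h := (huniq X g).trans (huniq X h).symm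
  constructor
  · rintro ⟨adj⟩ X f
    have := subsingleton_hom_of_two_terminal huniq h2 (f ≫ bang A) (bang X)
    let := uniqueOfSubsingleton (eqToHom (hom_eq X (f ≫ bang A) (bang X)))
    exact ⟨adj.homEquiv₂.symm.unique⟩
  · intro H
    have := subsingleton_hom_of_two_terminal huniq h2 (bang A) (bang A)
    have := (H T t).some
    have : Subsingleton (t ⟶ t) :=
      (Iso.homCongr (Iso.refl t)
        (whiskerRightIso (eqToIso (hom_eq T (bang T) (𝟙 T))) t ≪≫ λ_ t)).symm.subsingleton
    exact ⟨.ofSubsingleton (H A (𝟙 A)).some.default (eqToHom (hom_eq T _ _))⟩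

/-- In a strict 2-category with a 2-terminal object `T` (there is exactly one 1-cell
`bang X : X ⟶ T` from each object, and the only 2-cell from `bang X` to itself is
the identity), a 1-cell `t : T ⟶ A` is a terminal element of `A` (i.e. `bang A ⊣ t`)
if and only if `t` is representably terminal: for every `f : X ⟶ A` there is a
unique 2-cell `f ⟶ bang X ≫ t`. -/
theorem terminal_element_iff_representably_terminal
    {B : Type*} [Bicategory B] [Bicategory.Strict B]
    (T : B) (bang : ∀ X : B, X ⟶ T)
    (huniq : ∀ (X : B) (h : X ⟶ T), h = bang X)
    (h2 : ∀ (X : B) (φ : bang X ⟶ bang X), φ = 𝟙 (bang X))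
    {A : B} (t : T ⟶ A) :
    Nonempty (Bicategory.Adjunction (bang A) t) ↔
      ∀ (X : B) (f : X ⟶ A), Nonempty (Unique (f ⟶ bang X ≫ t)) :=
  terminal_element_iff_representably_terminal_general T bang huniq h2 t
end

section
/- Right adjoints between objects admitting all limits preserve them, in the following 2-categorical form. In any bicategory, suppose given adjunctions Δa ⊣ l_a (with Δa : a ⟶ a', l_a : a' ⟶ a), Δb ⊣ l_b (with Δb : b ⟶ b', l_b : b' ⟶ b), f ⊣ u (with f : b ⟶ a, u : a ⟶ b), and f' ⊣ u' (with f' : b' ⟶ a', u' : a' ⟶ b'), together with an invertible 2-cell f ≫ Δa ≅ Δb ≫ f'. Then there is an invertible 2-cell l_a ≫ u ≅ u' ≫ l_b. -/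
open CategoryTheory

/-- Right adjoints between objects admitting all limits preserve them, in the
2-categorical form: given adjunctions `Δa ⊣ la`, `Δb ⊣ lb`, `f ⊣ u`, `f' ⊣ u'`
and an invertible 2-cell `f ≫ Δa ≅ Δb ≫ f'`, there is an invertible 2-cell
`la ≫ u ≅ u' ≫ lb`. -/
theorem right_adjoint_preserves_all_limits {B : Type*} [Bicategory B] {a a' b b' : B}
    (Δa : a ⟶ a') (la : a' ⟶ a) (adja : Bicategory.Adjunction Δa la)
    (Δb : b ⟶ b') (lb : b' ⟶ b) (adjb : Bicategory.Adjunction Δb lb)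
    (f : b ⟶ a) (u : a ⟶ b) (adj : Bicategory.Adjunction f u)
    (f' : b' ⟶ a') (u' : a' ⟶ b') (adj' : Bicategory.Adjunction f' u')
    (i : f ≫ Δa ≅ Δb ≫ f') :
    Nonempty (la ≫ u ≅ u' ≫ lb) :=
  ⟨Bicategory.conjugateIsoEquiv (adj.comp adja) (adjb.comp adj') i.symm⟩
end
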